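/- Fix positive integers n, k, T, and matrices X ∈ ℝ^{n×T}, Y ∈ ℝ^{k×T}. Define L(W, M) := Tr(−(4/T)·Xᵀ·Wᵀ·Y + (2/T)·Yᵀ·M·Y) + 2·Tr(Wᵀ·W) − Tr(Mᵀ·M) for W ∈ ℝ^{k×n}, M ∈ ℝ^{k×k}. Then inf over W of sup over M of L(W, M) equals (1/T²)·‖Xᵀ·X − Yᵀ·Y‖_F² − (1/T²)·‖Xᵀ·X‖_F²; moreover the infimum over W is attained at W* = (1/T)·Y·Xᵀ and the supremum over M is attained at M* = (1/T)·Y·Yᵀ. -/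

import Mathlib

/-!
Completing both squares for the Frobenius inner product `⟨A, B⟩ = Tr(AᵀB)` and using cyclicity
of the trace gives `L(W, M) = 2‖W - W*‖² - 2‖W*‖² - ‖M - M*‖² + ‖M*‖²`. Hence `(W*, M*)` is a
saddle point, and the min-max value is `‖M*‖² - 2‖W*‖² = (‖YᵀY‖² - 2⟨YᵀY, XᵀX⟩) / T²`, which is
the claimed difference of squared Frobenius norms.
-/

open Matrix

section TraceForm

variable {m n k t R : Type*} [Fintype m] [Fintype n] [Fintype k] [Fintype t]

theorem trace_transpose_mul_self_nonneg [CommRing R] [LinearOrder R] [IsStrictOrderedRing R]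
    (P : Matrix m n R) : 0 ≤ (Pᵀ * P).trace :=
  Finset.sum_nonneg fun _ _ => Finset.sum_nonneg fun _ _ => mul_self_nonneg _

variable [CommRing R]

theorem trace_transpose_mul_comm (A B : Matrix m n R) : (Aᵀ * B).trace = (Bᵀ * A).trace := by
  rw [← trace_transpose, transpose_mul, transpose_transpose]

theorem trace_sub_transpose_mul_sub (A B : Matrix m n R) :
    ((A - B)ᵀ * (A - B)).trace = (Aᵀ * A).trace - 2 * (Bᵀ * A).trace + (Bᵀ * B).trace := by
  rw [transpose_sub, Matrix.sub_mul, Matrix.mul_sub, Matrix.mul_sub, trace_sub, trace_sub,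
    trace_sub, trace_transpose_mul_comm A B]
  ring

theorem trace_transpose_mul_transpose_mul (X : Matrix n t R) (W : Matrix k n R)
    (Y : Matrix k t R) : (Xᵀ * Wᵀ * Y).trace = ((Y * Xᵀ)ᵀ * W).trace := by
  rw [← trace_transpose]
  simp only [transpose_mul, transpose_transpose, Matrix.mul_assoc]
  exact trace_mul_cycle' _ _ _

theorem trace_transpose_mul_mul (Y : Matrix k t R) (M : Matrix k k R) :
    (Yᵀ * M * Y).trace = ((Y * Yᵀ)ᵀ * M).trace := by
  rw [transpose_mul, transpose_transpose, trace_mul_cycle, Matrix.mul_assoc]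

theorem trace_transpose_mul_self_mul_transpose (A : Matrix k t R) (B : Matrix n t R) :
    ((A * Bᵀ)ᵀ * (A * Bᵀ)).trace = ((Aᵀ * A)ᵀ * (Bᵀ * B)).trace := by
  simp only [transpose_mul, transpose_transpose, Matrix.mul_assoc]
  rw [trace_mul_comm]
  simp only [Matrix.mul_assoc]

end TraceForm

theorem iInf_iSup_eq_of_saddle {α β γ : Type*} [CompleteLattice γ] {f : α → β → γ} {a₀ : α}
    {b₀ : β} (hb : ∀ a b, f a b ≤ f a b₀) (ha : ∀ a, f a₀ b₀ ≤ f a b₀) :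
    ⨅ a, ⨆ b, f a b = f a₀ b₀ ∧ ⨆ b, f a₀ b = f a₀ b₀ := by
  have hsup (a : α) : ⨆ b, f a b = f a b₀ := le_antisymm (iSup_le (hb a)) (le_iSup _ b₀)
  refine ⟨?_, hsup a₀⟩
  simp only [hsup]
  exact le_antisymm (iInf_le _ a₀) (le_iInf ha)

section PSP

variable {n k t : Type*} [Fintype n] [Fintype k] [Fintype t]

noncomputable def pspObjective (X : Matrix n t ℝ) (Y : Matrix k t ℝ) (τ : ℝ) (W : Matrix k n ℝ)
    (M : Matrix k k ℝ) : ℝ :=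
  ((-(4 / τ)) • (Xᵀ * Wᵀ * Y) + (2 / τ) • (Yᵀ * M * Y)).trace
    + 2 * (Wᵀ * W).trace - (Mᵀ * M).trace

variable (X : Matrix n t ℝ) (Y : Matrix k t ℝ) (τ : ℝ)

noncomputable def pspOptimalFeedforward : Matrix k n ℝ := (1 / τ) • (Y * Xᵀ)

noncomputable def pspOptimalLateral : Matrix k k ℝ := (1 / τ) • (Y * Yᵀ)

theorem pspObjective_eq_completeSquare (W : Matrix k n ℝ) (M : Matrix k k ℝ) :
    pspObjective X Y τ W M =
      2 * ((W - pspOptimalFeedforward X Y τ)ᵀ * (W - pspOptimalFeedforward X Y τ)).trace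
        - 2 * ((pspOptimalFeedforward X Y τ)ᵀ * (pspOptimalFeedforward X Y τ)).trace
        - ((M - pspOptimalLateral Y τ)ᵀ * (M - pspOptimalLateral Y τ)).trace
        + ((pspOptimalLateral Y τ)ᵀ * (pspOptimalLateral Y τ)).trace := by
  rw [pspObjective, trace_add, trace_smul, trace_smul, smul_eq_mul, smul_eq_mul,
    trace_transpose_mul_transpose_mul, trace_transpose_mul_mul, trace_sub_transpose_mul_sub,
    trace_sub_transpose_mul_sub]
  simp only [pspOptimalFeedforward, pspOptimalLateral, transpose_smul, Matrix.smul_mul,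
    trace_smul, smul_eq_mul]
  ring

theorem pspObjective_le_pspObjective_optimalLateral (W : Matrix k n ℝ) (M : Matrix k k ℝ) :
    pspObjective X Y τ W M ≤ pspObjective X Y τ W (pspOptimalLateral Y τ) := by
  rw [pspObjective_eq_completeSquare, pspObjective_eq_completeSquare, sub_self]
  simp only [transpose_zero, Matrix.zero_mul, trace_zero, sub_zero]
  linarith [trace_transpose_mul_self_nonneg (M - pspOptimalLateral Y τ)]

theorem pspObjective_optimal_le_pspObjective (W : Matrix k n ℝ) :
    pspObjective X Y τ (pspOptimalFeedforward X Y τ) (pspOptimalLateral Y τ) ≤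
      pspObjective X Y τ W (pspOptimalLateral Y τ) := by
  rw [pspObjective_eq_completeSquare, pspObjective_eq_completeSquare, sub_self]
  simp only [transpose_zero, Matrix.zero_mul, trace_zero]
  linarith [trace_transpose_mul_self_nonneg (W - pspOptimalFeedforward X Y τ)]

theorem pspObjective_optimal_eq :
    pspObjective X Y τ (pspOptimalFeedforward X Y τ) (pspOptimalLateral Y τ) =
      1 / τ ^ 2 * ((Xᵀ * X - Yᵀ * Y)ᵀ * (Xᵀ * X - Yᵀ * Y)).trace
        - 1 / τ ^ 2 * ((Xᵀ * X)ᵀ * (Xᵀ * X)).trace := by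
  rw [pspObjective_eq_completeSquare, sub_self, sub_self, trace_sub_transpose_mul_sub]
  simp only [pspOptimalFeedforward, pspOptimalLateral, transpose_smul, Matrix.smul_mul,
    Matrix.mul_smul, trace_smul, smul_eq_mul,
    transpose_zero, Matrix.zero_mul, trace_zero, trace_transpose_mul_self_mul_transpose]
  ring

end PSP

theorem psp_mixed_objective_minmax_general (n k T : ℕ)
    (X : Matrix (Fin n) (Fin T) ℝ) (Y : Matrix (Fin k) (Fin T) ℝ) :
    let L : Matrix (Fin k) (Fin n) ℝ → Matrix (Fin k) (Fin k) ℝ → ℝ :=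
      fun W M =>
        ((-(4 / (T : ℝ))) • (Xᵀ * Wᵀ * Y) + (2 / (T : ℝ)) • (Yᵀ * M * Y)).trace
          + 2 * (Wᵀ * W).trace - (Mᵀ * M).trace
    let val : ℝ :=
      (1 / (T : ℝ) ^ 2) * ((Xᵀ * X - Yᵀ * Y)ᵀ * (Xᵀ * X - Yᵀ * Y)).trace
        - (1 / (T : ℝ) ^ 2) * ((Xᵀ * X)ᵀ * (Xᵀ * X)).trace
    let Wstar : Matrix (Fin k) (Fin n) ℝ := (1 / (T : ℝ)) • (Y * Xᵀ)
    let Mstar : Matrix (Fin k) (Fin k) ℝ := (1 / (T : ℝ)) • (Y * Yᵀ)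
    (⨅ W : Matrix (Fin k) (Fin n) ℝ, ⨆ M : Matrix (Fin k) (Fin k) ℝ,
        ((L W M : ℝ) : EReal)) = ((val : ℝ) : EReal) ∧
    (⨆ M : Matrix (Fin k) (Fin k) ℝ, ((L Wstar M : ℝ) : EReal)) = ((val : ℝ) : EReal) ∧
    ((L Wstar Mstar : ℝ) : EReal)
      = ⨆ M : Matrix (Fin k) (Fin k) ℝ, ((L Wstar M : ℝ) : EReal) := by
  intro L val Wstar Mstar
  have hval : L Wstar Mstar = val := pspObjective_optimal_eq X Y T
  obtain ⟨hminmax, hsup⟩ := iInf_iSup_eq_of_saddle (f := fun W M => ((L W M : ℝ) : EReal))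
    (a₀ := Wstar) (b₀ := Mstar)
    (fun W M => EReal.coe_le_coe (pspObjective_le_pspObjective_optimalLateral X Y T W M))
    (fun W => EReal.coe_le_coe (pspObjective_optimal_le_pspObjective X Y T W))
  exact ⟨by rw [hminmax, hval], by rw [hsup, hval], hsup.symm⟩

/-- The min-max over the synaptic weight variables of the mixed PSP objective
`L(W, M) = Tr(−(4/T)XᵀWᵀY + (2/T)YᵀMY) + 2 Tr(WᵀW) − Tr(MᵀM)` equals
`(1/T²)‖XᵀX − YᵀY‖_F² − (1/T²)‖XᵀX‖_F²`, with the infimum over `W` attained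
at `W* = (1/T)YXᵀ` and the supremum over `M` attained at `M* = (1/T)YYᵀ`. -/
theorem psp_mixed_objective_minmax (n k T : ℕ) (hn : 0 < n) (hk : 0 < k) (hT : 0 < T)
    (X : Matrix (Fin n) (Fin T) ℝ) (Y : Matrix (Fin k) (Fin T) ℝ) :
    let L : Matrix (Fin k) (Fin n) ℝ → Matrix (Fin k) (Fin k) ℝ → ℝ :=
      fun W M =>
        ((-(4 / (T : ℝ))) • (Xᵀ * Wᵀ * Y) + (2 / (T : ℝ)) • (Yᵀ * M * Y)).trace
          + 2 * (Wᵀ * W).trace - (Mᵀ * M).trace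
    let val : ℝ :=
      (1 / (T : ℝ) ^ 2) * ((Xᵀ * X - Yᵀ * Y)ᵀ * (Xᵀ * X - Yᵀ * Y)).trace
        - (1 / (T : ℝ) ^ 2) * ((Xᵀ * X)ᵀ * (Xᵀ * X)).trace
    let Wstar : Matrix (Fin k) (Fin n) ℝ := (1 / (T : ℝ)) • (Y * Xᵀ)
    let Mstar : Matrix (Fin k) (Fin k) ℝ := (1 / (T : ℝ)) • (Y * Yᵀ)
    (⨅ W : Matrix (Fin k) (Fin n) ℝ, ⨆ M : Matrix (Fin k) (Fin k) ℝ,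
        ((L W M : ℝ) : EReal)) = ((val : ℝ) : EReal) ∧
    (⨆ M : Matrix (Fin k) (Fin k) ℝ, ((L Wstar M : ℝ) : EReal)) = ((val : ℝ) : EReal) ∧
    ((L Wstar Mstar : ℝ) : EReal)
      = ⨆ M : Matrix (Fin k) (Fin k) ℝ, ((L Wstar M : ℝ) : EReal) :=
  psp_mixed_objective_minmax_general n k T X Y
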